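/- Let 1 ≤ N ≤ n, set ε = 1, and let q = (q_1,…,q_{n+1}) : ℝ → ℝ^{n+1} be smooth; write q̄ = (q_1,…,q_n). Then the Euler–Lagrange expressions of the purely kinetic Lagrangians satisfy, pointwise on ℝ: E_N(L^{n,−N,0})[q̄] = E_{N+1}(L^{n+1,−N,0})[q] + ½ (q_{n+1})_{xx}, and E_i(L^{n,−N,0})[q̄] = E_{i+1}(L^{n+1,−N,0})[q] for every i = N+1,…,n. -/

import Mathlib

noncomputable section

/-- Benenti potentials `V_i^{(k)}` for `k ≥ 0`: `Vpos n q k i = V_i^{(k)}(q)` (`i` 1-based),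
with `V_i^{(0)} = δ_{i n}` and `V_i^{(k+1)} = V_{i+1}^{(k)} - q_i V_1^{(k)}`, `V_{n+1}^{(k)} := 0`. -/
def Vpos (n : ℕ) (q : ℕ → ℝ) : ℕ → ℕ → ℝ
  | 0, i => if i = n then 1 else 0
  | k + 1, i => (if i = n then 0 else Vpos n q k (i + 1)) - q i * Vpos n q k 1

/-- Benenti potentials for negative superscripts: `Vneg n q j r = V_r^{(-j)}(q)`, via the
backward recursion `V_r^{(k)} = V_{r-1}^{(k+1)} - (q_{r-1}/q_n) V_n^{(k+1)}`, with
`V_0 := 0` and `q_0 := 1`. -/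
def Vneg (n : ℕ) (q : ℕ → ℝ) : ℕ → ℕ → ℝ
  | 0, r => if r = n then 1 else 0
  | j + 1, r =>
      (if r = 1 then 0 else Vneg n q j (r - 1)) -
        (if r = 1 then 1 else q (r - 1)) / q n * Vneg n q j n

/-- Benenti potential `V_i^{(k)}(q)` for `k : ℤ`, `i` 1-based. -/
def benenti (n : ℕ) (q : ℕ → ℝ) (k : ℤ) (i : ℕ) : ℝ :=
  if 0 ≤ k then Vpos n q k.toNat i else Vneg n q (-k).toNat i

/-- Reindex a vector of `ℝ^n` as a 1-based `ℕ`-indexed family (zero outside `1..n`). -/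
def extQ (n : ℕ) (Q : Fin n → ℝ) : ℕ → ℝ := fun a =>
  if h : 1 ≤ a ∧ a ≤ n then Q ⟨a - 1, by omega⟩ else 0

/-- The Stäckel Lagrangian `L^{n,m,k}(q,q_x) = ¼ ∑_{i,j} V_1^{(2n-m-i-j)}(q) q_{i,x} q_{j,x}
- (ε/4) V_1^{(k)}(q)` (indices 1-based). -/
def Lag (n : ℕ) (m k : ℤ) (ε : ℝ) (Q Qx : Fin n → ℝ) : ℝ :=
  (1 / 4) * ∑ i : Fin n, ∑ j : Fin n,
      benenti n (extQ n Q) (2 * (n : ℤ) - m - (((i : ℕ) : ℤ) + 1) - (((j : ℕ) : ℤ) + 1)) 1 *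
        Qx i * Qx j -
    ε / 4 * benenti n (extQ n Q) k 1

/-- Euler–Lagrange expression `E_i(L)[c](x) = (∂L/∂q_i)(c x, c_x x) - d/dx [(∂L/∂q_{i,x})(c x, c_x x)]`
along a curve `c : ℝ → ℝⁿ`. -/
def EL (n : ℕ) (L : (Fin n → ℝ) → (Fin n → ℝ) → ℝ) (c : ℝ → Fin n → ℝ) (i : Fin n)
    (x : ℝ) : ℝ :=
  fderiv ℝ (fun Q => L Q (deriv c x)) (c x) (Pi.single i 1) -
    deriv (fun y => fderiv ℝ (fun V => L (c y) V) (deriv c y) (Pi.single i 1)) x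

/-! `L^{M,-N,0} = ¼ ∑ g_{ab}(q) q_{a,x} q_{b,x} - const` is purely kinetic, with metric
`g_{ab} = V_1^{(2M+N-a-b)}`, and all these superscripts are `≥ N`, so only the forward
recursion is involved. In dimension `M`, `V_i^{(k)}` does not depend on `q_e` when
`k + i < M + e` and equals `δ_{i,M-k}` when `k < M`; moreover `V_i^{(k+1)}` in dimension `n + 1`
equals `V_i^{(k)}` in dimension `n` while `k + i ≤ 2n`, and the same holds for
`∂V_i^{(k)}/∂q_e`, which in addition satisfies `∂_{e+1} V_1^{(k+1)} = ∂_e V_1^{(k)}`. With the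
index shift `e ↦ e + 1`, the force and momentum terms of the two Euler–Lagrange expressions
therefore agree term by term, except for the metric entry coupling `q_{e+1,x}` with `q_{n+1,x}`:
it is the constant `δ_{eN}`, which produces `½ (q_{n+1})_{xx}` in `E_N`. -/

open Finset

/-- `dVpos M q k i e = ∂V_i^{(k)}/∂q_e`, defined by differentiating the recursion of `Vpos`. -/
def dVpos (M : ℕ) (q : ℕ → ℝ) : ℕ → ℕ → ℕ → ℝ
  | 0, _, _ => 0
  | k + 1, i, e => (if i = M then 0 else dVpos M q k (i + 1) e)
      - (if i = e then Vpos M q k 1 else 0) - q i * dVpos M q k 1 e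

section Potentials

variable (M : ℕ) {q q' : ℕ → ℝ}

theorem Vpos_succ (k i : ℕ) :
    Vpos M q (k + 1) i = (if i = M then 0 else Vpos M q k (i + 1)) - q i * Vpos M q k 1 := rfl

theorem dVpos_succ (k i e : ℕ) :
    dVpos M q (k + 1) i e = (if i = M then 0 else dVpos M q k (i + 1) e)
      - (if i = e then Vpos M q k 1 else 0) - q i * dVpos M q k 1 e := rfl

theorem Vpos_congr (h : ∀ a ∈ Icc 1 M, q a = q' a) (k : ℕ) :
    ∀ i ∈ Icc 1 M, Vpos M q k i = Vpos M q' k i := by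
  induction k with
  | zero => intro i _; rfl
  | succ k ih =>
    intro i hi
    have hi' := mem_Icc.mp hi
    rw [Vpos_succ, Vpos_succ, ih 1 (mem_Icc.mpr ⟨le_rfl, hi'.1.trans hi'.2⟩), h i hi]
    split_ifs with hiM
    · rfl
    · rw [ih (i + 1) (mem_Icc.mpr ⟨by omega, by omega⟩)]

theorem dVpos_congr (h : ∀ a ∈ Icc 1 M, q a = q' a) (e k : ℕ) :
    ∀ i ∈ Icc 1 M, dVpos M q k i e = dVpos M q' k i e := by
  induction k with
  | zero => intro i _; rfl
  | succ k ih =>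
    intro i hi
    have hi' := mem_Icc.mp hi
    have h1 : 1 ∈ Icc 1 M := mem_Icc.mpr ⟨le_rfl, hi'.1.trans hi'.2⟩
    rw [dVpos_succ, dVpos_succ, ih 1 h1, h i hi, Vpos_congr M h k 1 h1]
    by_cases hiM : i = M
    · simp only [hiM, if_true]
    · rw [if_neg hiM, if_neg hiM, ih (i + 1) (mem_Icc.mpr ⟨by omega, by omega⟩)]

theorem Vpos_of_lt {k : ℕ} (hk : k < M) (i : ℕ) :
    Vpos M q k i = if i = M - k then 1 else 0 := by
  induction k generalizing i with
  | zero => rfl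
  | succ k ih =>
    rw [Vpos_succ, ih (by omega), ih (by omega)]
    split_ifs <;> first | ring1 | (exfalso; omega)

theorem Vpos_succ_dim (hM : 1 ≤ M) (k : ℕ) :
    ∀ i, 1 ≤ i → i ≤ M → k + i ≤ 2 * M → Vpos (M + 1) q (k + 1) i = Vpos M q k i := by
  induction k with
  | zero =>
    intro i _ _ _
    simp only [Vpos]
    split_ifs <;> first | ring1 | (exfalso; omega)
  | succ k ih =>
    intro i h1 h2 hk
    rw [Vpos_succ (M + 1), Vpos_succ M, ih 1 le_rfl hM (by omega)]
    by_cases hi : i = M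
    · rw [if_neg (by omega), if_pos hi, hi, Vpos_of_lt (M + 1) (by omega), if_neg (by omega)]
    · rw [if_neg (by omega), if_neg hi, ih (i + 1) (by omega) (by omega) (by omega)]

theorem dVpos_eq_zero (e k : ℕ) :
    ∀ i, 1 ≤ i → i ≤ M → k + i < M + e → dVpos M q k i e = 0 := by
  induction k with
  | zero => intro i _ _ _; rfl
  | succ k ih =>
    intro i h1 h2 hk
    have hVpos : (if i = e then Vpos M q k 1 else 0) = 0 := by
      split_ifs with hie
      · rw [Vpos_of_lt M (by omega), if_neg (by omega)]
      · rfl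
    rw [dVpos_succ, ih 1 le_rfl (h1.trans h2) (by omega), hVpos]
    split_ifs
    · ring
    · rw [ih (i + 1) (by omega) (by omega) (by omega)]; ring

theorem dVpos_succ_succ {e : ℕ} (he1 : 1 ≤ e) (he2 : e < M) (k : ℕ) :
    ∀ i, dVpos M q (k + 1) i (e + 1)
      = dVpos M q k i e - if i = e + 1 then Vpos M q k 1 else 0 := by
  induction k with
  | zero =>
    intro i
    simp only [dVpos]
    split_ifs <;> ring1
  | succ k ih =>
    intro i
    rw [dVpos_succ M (k + 1) i (e + 1), ih (i + 1), ih 1, dVpos_succ M k i e]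
    split_ifs <;> first | ring1 | (exfalso; omega)

theorem dVpos_succ_dim (hM : 1 ≤ M) {e : ℕ} (he : e ≤ M) (k : ℕ) :
    ∀ i, 1 ≤ i → i ≤ M → k + i ≤ 2 * M + e →
      dVpos (M + 1) q (k + 1) i e = dVpos M q k i e := by
  induction k with
  | zero =>
    intro i _ _ _
    simp only [dVpos, Vpos]
    split_ifs <;> first | ring1 | (exfalso; omega)
  | succ k ih =>
    intro i h1 h2 hk
    have hVpos : (if i = e then Vpos (M + 1) q (k + 1) 1 else 0)
        = if i = e then Vpos M q k 1 else 0 := by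
      split_ifs with hie
      · exact Vpos_succ_dim M hM k 1 le_rfl hM (by omega)
      · rfl
    rw [dVpos_succ (M + 1), dVpos_succ M, ih 1 le_rfl hM (by omega), hVpos]
    by_cases hi : i = M
    · have htop : dVpos (M + 1) q (k + 1) (M + 1) e = 0 := by
        rw [dVpos_succ, dVpos_eq_zero (M + 1) e k 1 le_rfl (by omega) (by omega)]
        split_ifs <;> first | ring1 | (exfalso; omega)
      rw [if_neg (by omega), if_pos hi, hi, htop]
    · rw [if_neg (by omega), if_neg hi, ih (i + 1) (by omega) (by omega) (by omega)]

end Potentials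

section Calculus

variable {M : ℕ}

theorem extQ_succ (V : Fin M → ℝ) (i : Fin M) : extQ M V (i + 1) = V i := by
  simp [extQ, i.isLt]

theorem extQ_single (E : Fin M) (a : ℕ) :
    extQ M (Pi.single E 1) a = if a = E + 1 then 1 else 0 := by
  simp only [extQ, Pi.single_apply, Fin.ext_iff]
  split_ifs <;> first | rfl | (exfalso; omega)

theorem sum_fin_eq_sum_Icc {β : Type*} [AddCommMonoid β] (f : ℕ → β) :
    ∑ i : Fin M, f (i + 1) = ∑ a ∈ Icc 1 M, f a := by
  rw [Fin.sum_univ_eq_sum_range (fun i => f (i + 1)), range_eq_Ico, sum_Ico_add' f 0 M 1]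
  rfl

variable (M) in
def extQL (a : ℕ) : (Fin M → ℝ) →L[ℝ] ℝ :=
  if h : 1 ≤ a ∧ a ≤ M then ContinuousLinearMap.proj ⟨a - 1, by omega⟩ else 0

theorem extQL_apply (a : ℕ) (V : Fin M → ℝ) : extQL M a V = extQ M V a := by
  unfold extQL extQ
  split_ifs <;> rfl

theorem hasFDerivAt_extQ (a : ℕ) (P : Fin M → ℝ) :
    HasFDerivAt (fun Q => extQ M Q a) (extQL M a) P := by
  rw [show (fun Q => extQ M Q a) = extQL M a from funext fun Q => (extQL_apply a Q).symm]
  exact (extQL M a).hasFDerivAt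

variable {F : Type*} [NormedAddCommGroup F] [NormedSpace ℝ F] {g : F → ℕ → ℝ}
  {g' : ℕ → F →L[ℝ] ℝ} {p : F}

theorem hasFDerivAt_Vpos (hg : ∀ a ∈ Icc 1 M, HasFDerivAt (fun p => g p a) (g' a) p) (k : ℕ) :
    ∀ i ∈ Icc 1 M, HasFDerivAt (fun p => Vpos M (g p) k i)
      (∑ e ∈ Icc 1 M, dVpos M (g p) k i e • g' e) p := by
  induction k with
  | zero =>
    intro i _
    rw [show ∑ e ∈ Icc 1 M, dVpos M (g p) 0 i e • g' e = 0 by simp [dVpos]]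
    exact hasFDerivAt_const (if i = M then (1 : ℝ) else 0) p
  | succ k ih =>
    intro i hi
    have hshift : HasFDerivAt (fun p => if i = M then 0 else Vpos M (g p) k (i + 1))
        (if i = M then 0 else ∑ e ∈ Icc 1 M, dVpos M (g p) k (i + 1) e • g' e) p := by
      split_ifs with hiM
      · exact hasFDerivAt_const 0 p
      · exact ih (i + 1) (by simp only [mem_Icc] at hi ⊢; omega)
    have hprod := (hg i hi).mul (ih 1 (by simp only [mem_Icc] at hi ⊢; omega))
    refine (hshift.sub hprod).congr_fderiv (ContinuousLinearMap.ext fun v => ?_)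
    simp only [dVpos_succ, sub_apply, add_apply, smul_apply, _root_.sum_apply, smul_eq_mul,
      apply_ite (fun L : F →L[ℝ] ℝ => L v), zero_apply, sub_mul, ite_mul, zero_mul, mul_assoc,
      sum_sub_distrib, sum_ite_irrel, sum_const_zero, sum_ite_eq, hi, if_true, ← mul_sum]
    ring

end Calculus

/-- `4 ∂L/∂q_e` for `L = L^{M,-N,0}` at position `q` and velocity `u`, in 1-based
coordinates. -/
def kineticForce (M N : ℕ) (q u : ℕ → ℝ) (e : ℕ) : ℝ :=
  ∑ a ∈ Icc 1 M, ∑ b ∈ Icc 1 M, dVpos M q (2 * M + N - a - b) 1 e * u a * u b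

/-- `2 d/dx ∂L/∂q_{e,x}` for `L = L^{M,-N,0}` along a curve with position `q`, velocity `u` and
acceleration `w`, in 1-based coordinates. -/
def kineticMomentumRate (M N : ℕ) (q u w : ℕ → ℝ) (e : ℕ) : ℝ :=
  ∑ b ∈ Icc 1 M, ((∑ a ∈ Icc 1 M, dVpos M q (2 * M + N - e - b) 1 a * u a) * u b
    + Vpos M q (2 * M + N - e - b) 1 * w b)

def kineticEL (M N : ℕ) (q u w : ℕ → ℝ) (e : ℕ) : ℝ :=
  1 / 4 * kineticForce M N q u e - 1 / 2 * kineticMomentumRate M N q u w e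

section Lagrangian

variable {M : ℕ} (N : ℕ)

theorem Lag_neg_eq (Q V : Fin M → ℝ) :
    Lag M (-N) 0 1 Q V = 1 / 4 * ∑ a ∈ Icc 1 M, ∑ b ∈ Icc 1 M,
        Vpos M (extQ M Q) (2 * M + N - a - b) 1 * extQ M V a * extQ M V b
      - 1 / 4 * if 1 = M then 1 else 0 := by
  have hterm : ∀ i j : Fin M,
      benenti M (extQ M Q) (2 * (M : ℤ) - -(N : ℤ) - (((i : ℕ) : ℤ) + 1) - ((j : ℕ) + 1)) 1
        * V i * V j
      = Vpos M (extQ M Q) (2 * M + N - (i + 1) - (j + 1)) 1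
        * extQ M V (i + 1) * extQ M V (j + 1) := by
    intro i j
    rw [benenti, if_pos (by omega), extQ_succ, extQ_succ]
    congr 3
    omega
  unfold Lag
  simp only [hterm, ← sum_fin_eq_sum_Icc]
  rfl

theorem fderiv_Lag_neg_fst (P V : Fin M → ℝ) (E : Fin M) :
    fderiv ℝ (fun Q => Lag M (-N) 0 1 Q V) P (Pi.single E 1)
      = 1 / 4 * ∑ a ∈ Icc 1 M, ∑ b ∈ Icc 1 M,
          dVpos M (extQ M P) (2 * M + N - a - b) 1 (E + 1) * extQ M V a * extQ M V b := by
  have hE : (E : ℕ) + 1 ∈ Icc 1 M := mem_Icc.mpr ⟨by omega, E.isLt⟩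
  have hV (k : ℕ) := hasFDerivAt_Vpos (M := M) (fun a _ => hasFDerivAt_extQ a P) k 1
    (mem_Icc.mpr ⟨le_rfl, E.pos⟩)
  have hL := ((HasFDerivAt.fun_sum (u := Icc 1 M) fun a _ => HasFDerivAt.fun_sum (u := Icc 1 M)
    fun b _ => ((hV (2 * M + N - a - b)).mul_const (extQ M V a)).mul_const
      (extQ M V b)).const_mul (1 / 4 : ℝ)).sub_const (1 / 4 * if 1 = M then (1 : ℝ) else 0)
  rw [show (fun Q => Lag M (-N) 0 1 Q V) = _ from funext fun Q => Lag_neg_eq N Q V, hL.fderiv]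
  simp only [smul_apply, _root_.sum_apply, extQL_apply, extQ_single, smul_eq_mul, mul_ite,
    mul_one, mul_zero, sum_ite_eq', hE, if_true]
  exact congrArg _ (sum_congr rfl fun a _ => sum_congr rfl fun b _ => by ring)

theorem fderiv_Lag_neg_snd (P U : Fin M → ℝ) (E : Fin M) :
    fderiv ℝ (fun V => Lag M (-N) 0 1 P V) U (Pi.single E 1)
      = 1 / 2 * ∑ b ∈ Icc 1 M, Vpos M (extQ M P) (2 * M + N - (E + 1) - b) 1 * extQ M U b := by
  have hE : (E : ℕ) + 1 ∈ Icc 1 M := mem_Icc.mpr ⟨by omega, E.isLt⟩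
  have hL := ((HasFDerivAt.fun_sum (u := Icc 1 M) fun a _ => HasFDerivAt.fun_sum (u := Icc 1 M)
    fun b _ => ((hasFDerivAt_extQ a U).const_mul (Vpos M (extQ M P) (2 * M + N - a - b) 1)).fun_mul
      (hasFDerivAt_extQ b U)).const_mul (1 / 4 : ℝ)).sub_const
        (1 / 4 * if 1 = M then (1 : ℝ) else 0)
  rw [show (fun V => Lag M (-N) 0 1 P V) = _ from funext fun V => Lag_neg_eq N P V, hL.fderiv]
  simp only [sum_add_distrib, smul_add, add_apply, smul_apply, _root_.sum_apply, extQL_apply,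
    extQ_single, smul_eq_mul, mul_ite, mul_one, mul_zero, sum_ite_eq', hE, if_true, sum_ite_irrel,
    sum_const_zero]
  simp_rw [Nat.sub_right_comm _ _ ((E : ℕ) + 1), mul_comm (extQ M U _)]
  ring

theorem EL_Lag_neg (c : ℝ → Fin M → ℝ) (hc : Differentiable ℝ c) {x : ℝ}
    (hc' : DifferentiableAt ℝ (deriv c) x) (E : Fin M) :
    EL M (Lag M (-N) 0 1) c E x = kineticEL M N (extQ M (c x)) (extQ M (deriv c x))
      (extQ M (deriv (deriv c) x)) (E + 1) := by
  have hV (k : ℕ) : HasDerivAt (fun y => Vpos M (extQ M (c y)) k 1)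
      (∑ e ∈ Icc 1 M, dVpos M (extQ M (c x)) k 1 e * extQ M (deriv c x) e) x := by
    have := (hasFDerivAt_Vpos (M := M) (fun a _ => hasFDerivAt_extQ a (c x)) k 1
      (mem_Icc.mpr ⟨le_rfl, E.pos⟩)).comp_hasDerivAt x (hc x).hasDerivAt
    simp only [_root_.sum_apply, _root_.smul_apply, extQL_apply, smul_eq_mul] at this
    exact this
  have hu (b : ℕ) :
      HasDerivAt (fun y => extQ M (deriv c y) b) (extQ M (deriv (deriv c) x) b) x := by
    have := (hasFDerivAt_extQ b (deriv c x)).comp_hasDerivAt x hc'.hasDerivAt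
    rw [extQL_apply] at this
    exact this
  unfold EL
  simp_rw [fderiv_Lag_neg_fst, fderiv_Lag_neg_snd]
  rw [((HasDerivAt.fun_sum (u := Icc 1 M) fun b _ => (hV _).fun_mul (hu b)).const_mul
    (1 / 2 : ℝ)).deriv]
  rfl

end Lagrangian

section Stability

variable {M N : ℕ} {q q' u u' w w' : ℕ → ℝ}

theorem kineticEL_congr (hq : ∀ a ∈ Icc 1 M, q a = q' a) (hu : ∀ a ∈ Icc 1 M, u a = u' a)
    (hw : ∀ a ∈ Icc 1 M, w a = w' a) (e : ℕ) :
    kineticEL M N q u w e = kineticEL M N q' u' w' e := by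
  have hone {a : ℕ} (ha : a ∈ Icc 1 M) : 1 ∈ Icc 1 M :=
    mem_Icc.mpr ⟨le_rfl, (mem_Icc.mp ha).1.trans (mem_Icc.mp ha).2⟩
  unfold kineticEL kineticForce kineticMomentumRate
  congr 2
  · refine sum_congr rfl fun a ha => sum_congr rfl fun b hb => ?_
    rw [dVpos_congr M hq _ _ 1 (hone ha), hu a ha, hu b hb]
  · refine sum_congr rfl fun b hb => ?_
    rw [sum_congr rfl fun a ha => by rw [dVpos_congr M hq _ _ 1 (hone ha), hu a ha],
      Vpos_congr M hq _ 1 (hone hb), hu b hb, hw b hb]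

variable {n e : ℕ} (hN : 1 ≤ N) (hNe : N ≤ e) (hen : e ≤ n)
include hN hNe hen

theorem kineticForce_succ_dim : kineticForce (n + 1) N q u (e + 1) = kineticForce n N q u e := by
  unfold kineticForce
  have hrow : ∑ b ∈ Icc 1 (n + 1),
      dVpos (n + 1) q (2 * (n + 1) + N - (n + 1) - b) 1 (e + 1) * u (n + 1) * u b = 0 :=
    sum_eq_zero fun b hb => by
      rw [dVpos_eq_zero (n + 1) (e + 1) _ 1 le_rfl (by omega)
        (by simp only [mem_Icc] at hb; omega), zero_mul, zero_mul]
  rw [sum_Icc_succ_top (by omega), hrow, add_zero]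
  refine sum_congr rfl fun a ha => ?_
  have ha' := mem_Icc.mp ha
  rw [sum_Icc_succ_top (by omega), dVpos_eq_zero (n + 1) (e + 1) _ 1 le_rfl (by omega)
    (by omega), zero_mul, zero_mul, add_zero]
  refine sum_congr rfl fun b hb => ?_
  have hb' := mem_Icc.mp hb
  rw [show 2 * (n + 1) + N - a - b = 2 * n + N - a - b + 1 + 1 by omega,
    dVpos_succ_succ (n + 1) (by omega) (by omega), if_neg (by omega), sub_zero,
    dVpos_succ_dim n (by omega) hen _ 1 le_rfl (by omega) (by omega)]

theorem kineticMomentumRate_succ_dim :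
    kineticMomentumRate (n + 1) N q u w (e + 1)
      = kineticMomentumRate n N q u w e + if e = N then w (n + 1) else 0 := by
  unfold kineticMomentumRate
  have htop : (∑ a ∈ Icc 1 (n + 1), dVpos (n + 1) q (2 * (n + 1) + N - (e + 1) - (n + 1)) 1 a
        * u a) * u (n + 1) + Vpos (n + 1) q (2 * (n + 1) + N - (e + 1) - (n + 1)) 1 * w (n + 1)
      = if e = N then w (n + 1) else 0 := by
    rw [sum_eq_zero fun a ha => by
      rw [dVpos_eq_zero (n + 1) a _ 1 le_rfl (by omega) (by simp only [mem_Icc] at ha; omega),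
        zero_mul],
      zero_mul, zero_add, Vpos_of_lt (n + 1) (by omega)]
    split_ifs <;> first | ring1 | (exfalso; omega)
  rw [sum_Icc_succ_top (by omega), htop]
  congr 1
  refine sum_congr rfl fun b hb => ?_
  have hb' := mem_Icc.mp hb
  rw [show 2 * (n + 1) + N - (e + 1) - b = 2 * n + N - e - b + 1 by omega,
    sum_Icc_succ_top (by omega), dVpos_eq_zero (n + 1) (n + 1) _ 1 le_rfl (by omega) (by omega),
    zero_mul, add_zero, Vpos_succ_dim n (by omega) _ 1 le_rfl (by omega) (by omega)]
  congr 2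
  refine sum_congr rfl fun a ha => ?_
  rw [dVpos_succ_dim n (by omega) (mem_Icc.mp ha).2 _ 1 le_rfl (by omega) (by omega)]

theorem kineticEL_succ_dim :
    kineticEL n N q u w e
      = kineticEL (n + 1) N q u w (e + 1) + if e = N then w (n + 1) / 2 else 0 := by
  unfold kineticEL
  rw [kineticForce_succ_dim hN hNe hen, kineticMomentumRate_succ_dim hN hNe hen]
  split_ifs <;> ring

end Stability

section Restriction

variable {n : ℕ}

theorem extQ_castSucc (v : Fin (n + 1) → ℝ) (a : ℕ) (ha : a ∈ Icc 1 n) :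
    extQ n (fun j => v j.castSucc) a = extQ (n + 1) v a := by
  have ha' := mem_Icc.mp ha
  simp only [extQ, dif_pos ha', dif_pos (show 1 ≤ a ∧ a ≤ n + 1 by omega)]
  rfl

theorem deriv_apply {ι : Type*} [Fintype ι] {f : ℝ → ι → ℝ} {x : ℝ}
    (hf : DifferentiableAt ℝ f x) (j : ι) : deriv f x j = deriv (fun y => f y j) x := by
  rw [deriv_pi fun j => differentiableAt_pi.mp hf j]

theorem deriv_castSucc {f : ℝ → Fin (n + 1) → ℝ} {x : ℝ} (hf : DifferentiableAt ℝ f x) :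
    deriv (fun y (j : Fin n) => f y j.castSucc) x = fun j => deriv f x j.castSucc := by
  rw [deriv_pi (φ := fun y (j : Fin n) => f y j.castSucc)
    fun j => differentiableAt_pi.mp hf j.castSucc]
  exact funext fun j => (deriv_apply hf j.castSucc).symm

theorem EL_Lag_neg_castSucc {N e : ℕ} (hN : 1 ≤ N) (hNe : N ≤ e) (hen : e ≤ n)
    (q : ℝ → Fin (n + 1) → ℝ) (hq : ContDiff ℝ 2 q) (x : ℝ) :
    EL n (Lag n (-N) 0 1) (fun y j => q y j.castSucc)
        ⟨e - 1, Nat.sub_one_lt_of_le (hN.trans hNe) hen⟩ x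
      = EL (n + 1) (Lag (n + 1) (-N) 0 1) q ⟨e, Nat.lt_succ_of_le hen⟩ x
        + if e = N then deriv (deriv q) x (Fin.last n) / 2 else 0 := by
  have hq1 : Differentiable ℝ q := hq.differentiable (by norm_num)
  have hq2 : Differentiable ℝ (deriv q) := hq.differentiable_deriv_two
  have hc1 : Differentiable ℝ fun y (j : Fin n) => q y j.castSucc :=
    differentiable_pi.mpr fun j => differentiable_pi.mp hq1 j.castSucc
  have hc : deriv (fun y (j : Fin n) => q y j.castSucc) = fun y j => deriv q y j.castSucc :=
    funext fun y => deriv_castSucc (hq1 y)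
  have hc2 : DifferentiableAt ℝ (fun y (j : Fin n) => deriv q y j.castSucc) x :=
    differentiableAt_pi.mpr fun j => differentiableAt_pi.mp (hq2 x) j.castSucc
  rw [EL_Lag_neg N _ hc1 (hc ▸ hc2), EL_Lag_neg N q hq1 (hq2 x), hc, deriv_castSucc (hq2 x)]
  rw [kineticEL_congr (extQ_castSucc (q x)) (extQ_castSucc (deriv q x))
      (extQ_castSucc (deriv (deriv q) x)), show e - 1 + 1 = e by omega,
    kineticEL_succ_dim hN hNe hen]
  simp [extQ, Fin.last]

end Restriction

theorem euler_lagrange_stability_in_n (n N : ℕ) (hN : 1 ≤ N) (hNn : N ≤ n)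
    (q : ℝ → Fin (n + 1) → ℝ) (hq : ContDiff ℝ (⊤ : ℕ∞) q) :
    (∀ x : ℝ,
      EL n (Lag n (-(N : ℤ)) 0 1) (fun y j => q y j.castSucc) ⟨N - 1, by omega⟩ x =
        EL (n + 1) (Lag (n + 1) (-(N : ℤ)) 0 1) q ⟨N, by omega⟩ x +
          (1 / 2) * deriv (deriv (fun y => q y (Fin.last n))) x) ∧
    (∀ i : ℕ, (h1 : N + 1 ≤ i) → (h2 : i ≤ n) → ∀ x : ℝ,
      EL n (Lag n (-(N : ℤ)) 0 1) (fun y j => q y j.castSucc) ⟨i - 1, by omega⟩ x =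
        EL (n + 1) (Lag (n + 1) (-(N : ℤ)) 0 1) q ⟨i, by omega⟩ x) := by
  have hq2 : ContDiff ℝ 2 q := hq.of_le (by norm_cast)
  refine ⟨fun x => ?_, fun i h1 h2 x => ?_⟩
  · have hq1 : Differentiable ℝ q := hq2.differentiable (by norm_num)
    have hlast : deriv (deriv q) x (Fin.last n) = deriv (deriv fun y => q y (Fin.last n)) x := by
      rw [deriv_apply (hq2.differentiable_deriv_two x)]
      congr 1
      exact funext fun y => deriv_apply (hq1 y) _
    rw [EL_Lag_neg_castSucc hN le_rfl hNn q hq2 x, if_pos rfl, hlast]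
    ring
  · rw [EL_Lag_neg_castSucc hN (by omega) h2 q hq2 x, if_neg (by omega), add_zero]
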